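/- Let k ≥ 1 and let S be a finite semigroup satisfying u·x·y·v = u·y·x·v for all u, v ∈ S^k and all x, y ∈ S. Let u, v ∈ S^k, let s_1, …, s_n ∈ S, let t ∈ S, and for μ ∈ ℕ^n write s^μ for the product s_1^{μ_1}·…·s_n^{μ_n} in which factors with exponent 0 are omitted (so that u·s^μ·v = u·v if all μ_i = 0). Suppose ν ∈ ℕ^n is the lexicographically smallest tuple with t = u·s^ν·v. Then for all ξ, η ∈ ℕ^n with ξ_i ≤ ν_i and η_i ≤ ν_i for every i, the equality u·s^ξ = u·s^η implies ξ = η; in particular, (ν_1 + 1)·(ν_2 + 1)·…·(ν_n + 1) ≤ |S|. -/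

import Mathlib

/-- Product of a nonempty list of semigroup elements (head times the rest). -/
def listProd₁ {S : Type*} [Semigroup S] : S → List S → S
  | a, [] => a
  | a, b :: l => listProd₁ (a * b) l

/-- `Σ^{≤k}`: elements expressible as a nonempty product of at most `k` elements of `Sig`. -/
def ProdLE {S : Type*} [Semigroup S] (Sig : Set S) (k : ℕ) : Set S :=
  { t | ∃ (a : S) (L : List S),
      a ∈ Sig ∧ (∀ x ∈ L, x ∈ Sig) ∧ L.length + 1 ≤ k ∧ listProd₁ a L = t }

/-- `S^k`: the set of all products of exactly `k` elements of `S`. -/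
def powSet (S : Type*) [Semigroup S] (k : ℕ) : Set S :=
  { t | ∃ (a : S) (L : List S), L.length + 1 = k ∧ listProd₁ a L = t }

/-- `s^μ = s_1^{μ_1} ⋯ s_n^{μ_n}`, computed in `WithOne S` so that factors with
exponent `0` are omitted (the empty product is `1`). -/
def expProd {S : Type*} [Semigroup S] {n : ℕ} (s : Fin n → S) (μ : Fin n → ℕ) : WithOne S :=
  (List.ofFn (fun i => (s i : WithOne S) ^ (μ i))).prod

/-- The lexicographic order on exponent tuples: `ν ≤ₗₑₓ μ`. -/
def LexLE {n : ℕ} (ν μ : Fin n → ℕ) : Prop :=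
  ν = μ ∨ ∃ i : Fin n, ν i < μ i ∧ ∀ j : Fin n, j < i → ν j = μ j

section Aux
variable {S : Type*} [Semigroup S]

lemma listProd₁_append (a : S) (L : List S) (x : S) :
    listProd₁ a (L ++ [x]) = listProd₁ a L * x := by
  induction L generalizing a with
  | nil => rfl
  | cons b l ih => simpa [listProd₁] using ih (a*b)

lemma powSet_succ_subset {k : ℕ} (hk : 1 ≤ k) : powSet S (k+1) ⊆ powSet S k := by
  rintro t ⟨a, L, hL, hp⟩
  cases L with
  | nil => simp at hL; omega
  | cons b L' => exact ⟨a*b, L', by simp at hL ⊢; omega, hp⟩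

lemma powSet_mul_right {k : ℕ} (hk : 1 ≤ k) {a : S} (ha : a ∈ powSet S k) (x : S) :
    a * x ∈ powSet S k := by
  obtain ⟨b, L, hL, hp⟩ := ha
  exact powSet_succ_subset hk ⟨b, L ++ [x], by simp; omega, by rw [listProd₁_append, hp]⟩

lemma mul_listProd₁ (x b : S) (L : List S) : x * listProd₁ b L = listProd₁ (x*b) L := by
  induction L generalizing b with
  | nil => rfl
  | cons c l ih => simpa [listProd₁, mul_assoc] using ih (b*c)

lemma powSet_mul_left {k : ℕ} {a : S} (ha : a ∈ powSet S k) (x : S) :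
    x * a ∈ powSet S k := by
  obtain ⟨b, L, hL, hp⟩ := ha
  exact ⟨x*b, L, hL, by rw [← mul_listProd₁, hp]⟩

/-- elements of `WithOne S` that are coercions of elements of `powSet S k`. -/
def PK (S : Type*) [Semigroup S] (k : ℕ) : Set (WithOne S) :=
  { w | ∃ a ∈ powSet S k, w = (a : WithOne S) }

lemma PK_mul_right {k : ℕ} (hk : 1 ≤ k) {U : WithOne S} (hU : U ∈ PK S k) (w : WithOne S) :
    U * w ∈ PK S k := by
  obtain ⟨a, ha, rfl⟩ := hU
  refine WithOne.cases_on w ?_ ?_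
  · simpa using ⟨a, ha, rfl⟩
  · intro x; exact ⟨a * x, powSet_mul_right hk ha x, by simp⟩

lemma PK_mul_left {k : ℕ} {V : WithOne S} (hV : V ∈ PK S k) (w : WithOne S) :
    w * V ∈ PK S k := by
  obtain ⟨a, ha, rfl⟩ := hV
  refine WithOne.cases_on w ?_ ?_
  · simpa using ⟨a, ha, rfl⟩
  · intro x; exact ⟨x * a, powSet_mul_left ha x, by simp⟩

/-- context congruence -/
def ctxCon (S : Type*) [Semigroup S] (k : ℕ) (hk : 1 ≤ k) : Con (WithOne S) where
  r x y := ∀ U ∈ PK S k, ∀ V ∈ PK S k, U * x * V = U * y * V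
  iseqv := by
    constructor
    · intro x U _ V _; rfl
    · intro x y h U hU V hV; exact (h U hU V hV).symm
    · intro x y z h1 h2 U hU V hV; rw [h1 U hU V hV, h2 U hU V hV]
  mul' := by
    intro w x y z h1 h2 U hU V hV
    have e1 : U * (w * y) * V = (U * w) * y * V := by rw [mul_assoc U w y]
    have e2 : (U * w) * y * V = (U * w) * z * V :=
      h2 (U * w) (PK_mul_right hk hU w) V hV
    have e3 : (U * w) * z * V = U * w * (z * V) := by rw [mul_assoc]
    have e4 : U * w * (z * V) = U * x * (z * V) := h1 U hU (z * V) (PK_mul_left hV z)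
    have e5 : U * x * (z * V) = U * (x * z) * V := by rw [mul_assoc, ← mul_assoc x z V, ← mul_assoc]
    rw [e1, e2, e3, e4, e5]

end Aux

section Aux2
variable {S : Type*} [Semigroup S] {k : ℕ}

lemma ctx_comm (hk : 1 ≤ k)
    (hperm : ∀ u ∈ powSet S k, ∀ v ∈ powSet S k, ∀ x y : S, u * x * y * v = u * y * x * v)
    (a b : WithOne S) : ctxCon S k hk (a * b) (b * a) := by
  rintro U ⟨u', hu', rfl⟩ V ⟨v', hv', rfl⟩
  refine WithOne.cases_on a ?_ ?_
  · simp
  · intro x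
    refine WithOne.cases_on b ?_ ?_
    · simp
    · intro y
      have : u' * (x * y) * v' = u' * (y * x) * v' := by
        rw [← mul_assoc, ← mul_assoc, hperm u' hu' v' hv' x y]
      exact_mod_cast this
end Aux2
section Aux3
variable {S : Type*} [Semigroup S] {k : ℕ}

lemma expProd_add (hk : 1 ≤ k)
    (hperm : ∀ u ∈ powSet S k, ∀ v ∈ powSet S k, ∀ x y : S, u * x * y * v = u * y * x * v)
    {n : ℕ} (s : Fin n → S) (α β : Fin n → ℕ) :
    ctxCon S k hk (expProd s (fun i => α i + β i)) (expProd s α * expProd s β) := by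
  set c := ctxCon S k hk with hc
  letI : CommMonoid c.Quotient :=
    { (inferInstance : Monoid c.Quotient) with
      mul_comm := by
        intro a b
        refine Con.induction_on₂ a b fun a b => ?_
        have := ctx_comm hk hperm a b
        rw [← Con.eq] at this
        simpa using this }
  rw [← Con.eq]
  have key : ∀ μ : Fin n → ℕ,
      (c.mk' (expProd s μ)) = ∏ i, (c.mk' ((s i : WithOne S)))^(μ i) := by
    intro μ
    unfold expProd
    rw [map_list_prod, List.map_ofFn, Fin.prod_ofFn]
    simp [map_pow, Function.comp]
  have h1 : (c.mk' (expProd s (fun i => α i + β i)) : c.Quotient)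
      = c.mk' (expProd s α * expProd s β) := by
    rw [map_mul, key, key, key, ← Finset.prod_mul_distrib]
    simp [pow_add]
  simpa using h1
end Aux3
section Aux4
variable {S : Type*} [Semigroup S] {k : ℕ}

lemma shift_exp (hk : 1 ≤ k)
    (hperm : ∀ u ∈ powSet S k, ∀ v ∈ powSet S k, ∀ x y : S, u * x * y * v = u * y * x * v)
    {n : ℕ} (s : Fin n → S) (u v : S) (hu : u ∈ powSet S k) (hv : v ∈ powSet S k)
    (ξ η ζ : Fin n → ℕ)
    (h : (u : WithOne S) * expProd s ξ = (u : WithOne S) * expProd s η) :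
    (u : WithOne S) * expProd s (fun i => ξ i + ζ i) * (v : WithOne S)
      = (u : WithOne S) * expProd s (fun i => η i + ζ i) * (v : WithOne S) := by
  have hU : ((u : WithOne S)) ∈ PK S k := ⟨u, hu, rfl⟩
  have hV : ((v : WithOne S)) ∈ PK S k := ⟨v, hv, rfl⟩
  have hA := expProd_add hk hperm s ξ ζ (u : WithOne S) hU (v : WithOne S) hV
  have hB := expProd_add hk hperm s η ζ (u : WithOne S) hU (v : WithOne S) hV
  rw [hA, hB]
  rw [← mul_assoc, ← mul_assoc, mul_assoc _ (expProd s ξ) _, mul_assoc _ (expProd s η) _,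
    ← mul_assoc _ (expProd s ξ), ← mul_assoc _ (expProd s η), h]
end Aux4

/-- if `ν` is the lexicographically smallest exponent tuple with
`t = u·s^ν·v`, then on tuples componentwise below `ν` the map `ξ ↦ u·s^ξ` is
injective; in particular `(ν_1+1)⋯(ν_n+1) ≤ |S|`. -/
theorem lex_minimal_exponents_injective
    (k : ℕ) (hk : 1 ≤ k) (S : Type*) [Semigroup S] [Fintype S]
    (hperm : ∀ u ∈ powSet S k, ∀ v ∈ powSet S k, ∀ x y : S, u * x * y * v = u * y * x * v)
    (u v : S) (hu : u ∈ powSet S k) (hv : v ∈ powSet S k)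
    (n : ℕ) (s : Fin n → S) (t : S) (ν : Fin n → ℕ)
    (hν : (t : WithOne S) = (u : WithOne S) * expProd s ν * (v : WithOne S))
    (hmin : ∀ μ : Fin n → ℕ,
      (t : WithOne S) = (u : WithOne S) * expProd s μ * (v : WithOne S) → LexLE ν μ) :
    (∀ ξ η : Fin n → ℕ, (∀ i, ξ i ≤ ν i) → (∀ i, η i ≤ ν i) →
      (u : WithOne S) * expProd s ξ = (u : WithOne S) * expProd s η → ξ = η) ∧
    (∏ i, (ν i + 1)) ≤ Fintype.card S := by
  have inj : ∀ ξ η : Fin n → ℕ, (∀ i, ξ i ≤ ν i) → (∀ i, η i ≤ ν i) →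
      (u : WithOne S) * expProd s ξ = (u : WithOne S) * expProd s η → ξ = η := by
    intro ξ η hξ hη heq
    by_contra hne
    have hD : (Finset.univ.filter (fun i => ξ i ≠ η i)).Nonempty := by
      by_contra hD
      apply hne
      funext i
      by_contra hi
      exact hD ⟨i, by simpa using hi⟩
    set i := (Finset.univ.filter (fun i => ξ i ≠ η i)).min' hD with hi
    have hnei : ξ i ≠ η i := by
      have := Finset.min'_mem _ hD
      simpa using this
    have hpre : ∀ j : Fin n, j < i → ξ j = η j := by
      intro j hj
      by_contra hjne
      have : i ≤ j := Finset.min'_le _ _ (by simpa using hjne)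
      exact absurd hj (not_lt.mpr this)
    have claim : ∀ ξ' η' : Fin n → ℕ, (∀ i, ξ' i ≤ ν i) →
        (u : WithOne S) * expProd s ξ' = (u : WithOne S) * expProd s η' →
        (∀ j : Fin n, j < i → ξ' j = η' j) → ¬ (η' i < ξ' i) := by
      intro ξ' η' hξ' heq' hpre' hlt
      have hsum : (fun j => ξ' j + (ν j - ξ' j)) = ν := by
        funext j; have := hξ' j; omega
      set μ := fun j => η' j + (ν j - ξ' j) with hμ
      have h1 : (t : WithOne S) = (u : WithOne S) * expProd s μ * (v : WithOne S) := by
        rw [hν, ← hsum]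
        exact shift_exp hk hperm s u v hu hv ξ' η' _ heq'
      have hmμ := hmin μ h1
      have hμi : μ i < ν i := by
        have h1 := hξ' i; simp only [hμ]; omega
      have hμj : ∀ j : Fin n, j < i → μ j = ν j := by
        intro j hj
        have := hpre' j hj
        have h2 := hξ' j
        simp only [hμ]; omega
      rcases hmμ with heqν | ⟨i', hi', hpre''⟩
      · rw [← heqν] at hμi; omega
      · rcases lt_trichotomy i' i with h | h | h
        · have := hμj i' h; omega
        · subst h; omega
        · have := hpre'' i h; omega
    have h1 := claim ξ η hξ heq hpre
    have h2 := claim η ξ hη heq.symm (fun j hj => (hpre j hj).symm)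
    omega
  refine ⟨inj, ?_⟩
  have hne1 : ∀ w : WithOne S, (u : WithOne S) * w ≠ 1 := by
    intro w
    refine WithOne.cases_on w ?_ ?_
    · simpa using WithOne.coe_ne_one
    · intro x
      rw [← WithOne.coe_mul]
      exact WithOne.coe_ne_one
  set F : (∀ i : Fin n, Fin (ν i + 1)) → S :=
    fun x => WithOne.unone (hne1 (expProd s (fun i => (x i : ℕ))))
  have hFinj : Function.Injective F := by
    intro x y hxy
    have : ((F x : S) : WithOne S) = ((F y : S) : WithOne S) := by rw [hxy]
    rw [WithOne.coe_unone, WithOne.coe_unone] at this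
    have hxy' := inj (fun i => (x i : ℕ)) (fun i => (y i : ℕ))
      (fun i => Nat.lt_succ_iff.mp (x i).isLt) (fun i => Nat.lt_succ_iff.mp (y i).isLt) this
    funext i
    exact Fin.ext (congrFun hxy' i)
  calc (∏ i, (ν i + 1)) = Fintype.card (∀ i : Fin n, Fin (ν i + 1)) := by
        simp [Fintype.card_pi]
    _ ≤ Fintype.card S := Fintype.card_le_of_injective F hFinj
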